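/- arXiv:math/9907085 — 13 statements merged into one kernel-verified Lean document; each statement's English description precedes it below -/
import Mathlib

section
/- Let (B,·) be a left loop and let H ≤ Sym₁(B) be a transassociant of B. Then the set B × H with the binary operation (x,φ)·(y,ψ) = (x·φ(y), L(x,φ(y)) ∘ μ_y(φ) ∘ φ ∘ ψ) is a group: the operation is associative, (1, id) is a two-sided identity, and every element has a two-sided inverse. -/
/-!
The map `(x, φ) ↦ L_x ∘ φ` from `B × H` to `Sym(B)` is injective, because `φ` fixes `1` and so
`x` is recovered as the image of `1`, and it carries the twisted product to composition of
permutations. Associativity and the identity are therefore inherited from `Sym(B)`. For inverses,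
`(L_x ∘ φ)⁻¹ = L_z ∘ ψ` with `z = φ⁻¹ (L_x⁻¹ 1)` and `ψ⁻¹ = L_x ∘ φ ∘ L_z`; since `x · φ(z) = 1`,
`ψ⁻¹ = L(x, φ z) ∘ μ_z(φ) ∘ φ` lies in `H`.
-/

namespace LeftLoop

open Equiv

variable {B : Type*}

def twistedMul [Mul B] (L : B → Perm B) (p q : B × Perm B) : B × Perm B :=
  (p.1 * p.2 q.1,
    ((L (p.1 * p.2 q.1))⁻¹ * L p.1 * L (p.2 q.1)) *
      ((L (p.2 q.1))⁻¹ * p.2 * L q.1 * p.2⁻¹) * p.2 * q.2)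

def toPerm (L : B → Perm B) (p : B × Perm B) : Perm B :=
  L p.1 * p.2

variable {L : B → Perm B}

theorem toPerm_twistedMul [Mul B] (p q : B × Perm B) :
    toPerm L (twistedMul L p q) = toPerm L p * toPerm L q := by
  simp only [toPerm, twistedMul]
  group

theorem leftMul_one [Mul B] [One B] (hL : ∀ x y : B, L x y = x * y)
    (one_mul' : ∀ x : B, 1 * x = x) : L 1 = 1 := by
  ext y
  rw [hL, one_mul']
  rfl

theorem toPerm_one [One B] (hL1 : L 1 = 1) : toPerm L (1, 1) = 1 := by
  simp [toPerm, hL1]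

theorem toPerm_injOn [Mul B] [One B] (hL : ∀ x y : B, L x y = x * y)
    (mul_one' : ∀ x : B, x * 1 = x) : Set.InjOn (toPerm L) {p | p.2 1 = 1} := by
  intro p hp q hq h
  have apply_one : ∀ r : B × Perm B, r.2 1 = 1 → toPerm L r 1 = r.1 := fun r hr => by
    rw [toPerm, Perm.mul_apply, hr, hL, mul_one']
  have h1 : p.1 = q.1 := by rw [← apply_one p hp, ← apply_one q hq, h]
  rw [toPerm, toPerm, h1] at h
  exact Prod.ext h1 (mul_left_cancel h)

variable {H : Subgroup (Perm B)}

theorem twistedMul_snd_mem [Mul B] (hHinn : ∀ x y : B, (L (x * y))⁻¹ * L x * L y ∈ H)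
    (hHdev : ∀ (x : B), ∀ φ ∈ H, (L (φ x))⁻¹ * φ * L x * φ⁻¹ ∈ H)
    {p q : B × Perm B} (hp : p.2 ∈ H) (hq : q.2 ∈ H) : (twistedMul L p q).2 ∈ H :=
  mul_mem (mul_mem (mul_mem (hHinn p.1 (p.2 q.1)) (hHdev q.1 p.2 hp)) hp) hq

theorem exists_toPerm_eq_inv [Mul B] [One B] (hL : ∀ x y : B, L x y = x * y) (hL1 : L 1 = 1)
    (hHinn : ∀ x y : B, (L (x * y))⁻¹ * L x * L y ∈ H)
    (hHdev : ∀ (x : B), ∀ φ ∈ H, (L (φ x))⁻¹ * φ * L x * φ⁻¹ ∈ H)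
    {p : B × Perm B} (hp : p.2 ∈ H) :
    ∃ q : B × Perm B, q.2 ∈ H ∧ toPerm L q = (toPerm L p)⁻¹ := by
  obtain ⟨x, φ⟩ := p
  set z : B := φ⁻¹ ((L x)⁻¹ 1)
  have hxz : x * φ z = 1 := by
    simp [z, ← hL]
  have inner_mem : L x * L (φ z) ∈ H := by
    simpa [hxz, hL1] using hHinn x (φ z)
  have mem : L x * φ * L z ∈ H := by
    convert mul_mem (mul_mem inner_mem (hHdev z φ hp)) hp using 1
    group
  refine ⟨(z, (L x * φ * L z)⁻¹), inv_mem mem, ?_⟩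
  simp only [toPerm]
  group

end LeftLoop

open LeftLoop in
/-- Let `(B,·)` be a left loop and let `H ≤ Sym₁(B)` be a
transassociant of `B`.  Then the set `B × H` with the binary operation
`(x,φ)·(y,ψ) = (x·φ(y), L(x,φ(y)) * μ_y(φ) * φ * ψ)` is a group: the operation
is `H`-closed and associative, `(1, id)` is a two-sided identity, and every
element has a two-sided inverse.  (Elements of `B × H` are modelled as pairs
in `B × Equiv.Perm B` whose second component lies in the subgroup `H`.) -/
theorem statement4 {B : Type*} [Mul B] [One B]
    (one_mul' : ∀ x : B, 1 * x = x) (mul_one' : ∀ x : B, x * 1 = x)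
    (L : B → Equiv.Perm B) (hL : ∀ x y : B, L x y = x * y)
    (H : Subgroup (Equiv.Perm B))
    (hH1 : ∀ φ ∈ H, φ 1 = 1)
    (hHinn : ∀ x y : B, (L (x * y))⁻¹ * L x * L y ∈ H)
    (hHdev : ∀ (x : B), ∀ φ ∈ H, (L (φ x))⁻¹ * φ * L x * φ⁻¹ ∈ H)
    (op : B × Equiv.Perm B → B × Equiv.Perm B → B × Equiv.Perm B)
    (hop : ∀ p q : B × Equiv.Perm B, op p q =
      (p.1 * p.2 q.1,
        ((L (p.1 * p.2 q.1))⁻¹ * L p.1 * L (p.2 q.1)) *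
          ((L (p.2 q.1))⁻¹ * p.2 * L q.1 * p.2⁻¹) * p.2 * q.2)) :
    (∀ p q : B × Equiv.Perm B, p.2 ∈ H → q.2 ∈ H → (op p q).2 ∈ H) ∧
    (∀ p q r : B × Equiv.Perm B, p.2 ∈ H → q.2 ∈ H → r.2 ∈ H →
      op (op p q) r = op p (op q r)) ∧
    (∀ p : B × Equiv.Perm B, p.2 ∈ H → op (1, 1) p = p ∧ op p (1, 1) = p) ∧
    (∀ p : B × Equiv.Perm B, p.2 ∈ H →
      ∃ q : B × Equiv.Perm B, q.2 ∈ H ∧ op p q = (1, 1) ∧ op q p = (1, 1)) := by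
  obtain rfl : op = twistedMul L := funext₂ hop
  have hL1 := leftMul_one hL one_mul'
  have inj : Set.InjOn (toPerm L) {p | p.2 ∈ H} :=
    (toPerm_injOn hL mul_one').mono fun p hp => hH1 p.2 hp
  have closed {p q : B × Equiv.Perm B} (hp : p.2 ∈ H) (hq : q.2 ∈ H) :
      (twistedMul L p q).2 ∈ H :=
    twistedMul_snd_mem hHinn hHdev hp hq
  refine ⟨fun p q => closed, fun p q r hp hq hr => ?_, fun p hp => ?_, fun p hp => ?_⟩
  · refine inj (closed (closed hp hq) hr) (closed hp (closed hq hr)) ?_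
    simp only [toPerm_twistedMul, mul_assoc]
  · exact ⟨inj (closed H.one_mem hp) hp (by simp [toPerm_twistedMul, toPerm_one hL1]),
      inj (closed hp H.one_mem) hp (by simp [toPerm_twistedMul, toPerm_one hL1])⟩
  · obtain ⟨q, hq, hpq⟩ := exists_toPerm_eq_inv hL hL1 hHinn hHdev hp
    exact ⟨q, hq, inj (closed hp hq) H.one_mem (by simp [toPerm_twistedMul, hpq, toPerm_one hL1]),
      inj (closed hq hp) H.one_mem (by simp [toPerm_twistedMul, hpq, toPerm_one hL1])⟩
end

section
/- Let G be a group, H a subgroup of G, and B ⊆ G a unital left transversal of H, with induced operation · on B. Then the following are equivalent: (i) B is also a right transversal of H in G, i.e. every g ∈ G factors uniquely as g = h a with h ∈ H and a ∈ B; (ii) B⁻¹ = {x⁻¹ : x ∈ B} is a left transversal of H in G; (iii) every element of (B,·) has a unique left inverse, i.e. for each x ∈ B there exists a unique y ∈ B with y·x = 1. -/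
/-! Inversion exchanges right and left cosets, so (i) and (ii) both say that for every `g` exactly
one `y ∈ B` has `y * g ∈ H`. Whether `y * g ∈ H` depends only on the coset `gH`, which meets `B`,
so it suffices to ask this for `g ∈ B`. Finally, for `x y ∈ B`, `y · x = 1` holds exactly when
`y * x ∈ H`, since `1` is the representative of `H` in `B`. -/

theorem existsUnique_mem_image_inv_iff {G : Type*} [InvolutiveInv G] (B : Set G)
    (P : G → Prop) : (∃! b, b ∈ (fun x : G => x⁻¹) '' B ∧ P b⁻¹) ↔ ∃! y, y ∈ B ∧ P y :=
  (Equiv.inv G).existsUnique_congr fun b => by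
    rw [Set.image_inv_eq_inv, Set.mem_inv, Equiv.inv_apply]

namespace Subgroup

variable {G : Type*} [Group G] (H : Subgroup G) (B : Set G)

theorem existsUnique_mul_inv_mem_iff (g : G) :
    (∃! b, b ∈ B ∧ g * b⁻¹ ∈ H) ↔ ∃! b, b ∈ B ∧ b * g⁻¹ ∈ H :=
  existsUnique_congr fun b => by rw [← H.inv_mem_iff, mul_inv_rev, inv_inv]

theorem forall_existsUnique_mul_mem_iff (hB : ∀ g : G, ∃ b ∈ B, b⁻¹ * g ∈ H) :
    (∀ g : G, ∃! y, y ∈ B ∧ y * g ∈ H) ↔ ∀ x ∈ B, ∃! y, y ∈ B ∧ y * x ∈ H := by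
  refine ⟨fun h x _ => h x, fun h g => ?_⟩
  obtain ⟨b, hb, hbg⟩ := hB g
  refine (existsUnique_congr fun y => ?_).mp (h b hb)
  rw [← H.mul_mem_cancel_right hbg, mul_assoc, mul_inv_cancel_left]

theorem dot_eq_one_iff_mul_mem (h1B : (1 : G) ∈ B)
    (htrans : ∀ g : G, ∃! b : G, b ∈ B ∧ b⁻¹ * g ∈ H) (dot : G → G → G)
    (hdotB : ∀ x ∈ B, ∀ y ∈ B, dot x y ∈ B)
    (hdotH : ∀ x ∈ B, ∀ y ∈ B, (dot x y)⁻¹ * (x * y) ∈ H) {x y : G} (hx : x ∈ B) (hy : y ∈ B) :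
    dot x y = 1 ↔ x * y ∈ H := by
  constructor
  · intro h
    simpa [h] using hdotH x hx y hy
  · intro h
    exact (htrans (x * y)).unique ⟨hdotB x hx y hy, hdotH x hx y hy⟩ ⟨h1B, by simpa using h⟩

end Subgroup

/-- Let `G` be a group, `H` a subgroup and `B ⊆ G` a unital left
transversal of `H`, with induced operation `dot` on `B`.  Then the following
are equivalent: (i) `B` is also a right transversal of `H` in `G` (each `g ∈ G`
lies in `Hb` for a unique `b ∈ B`); (ii) `B⁻¹ = {x⁻¹ : x ∈ B}` is a left
transversal of `H` in `G`; (iii) every element of `(B, dot)` has a unique left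
inverse. -/
theorem statement6 {G : Type*} [Group G] (H : Subgroup G) (B : Set G)
    (h1B : (1 : G) ∈ B)
    (htrans : ∀ g : G, ∃! b : G, b ∈ B ∧ b⁻¹ * g ∈ H)
    (dot : G → G → G)
    (hdotB : ∀ x ∈ B, ∀ y ∈ B, dot x y ∈ B)
    (hdotH : ∀ x ∈ B, ∀ y ∈ B, (dot x y)⁻¹ * (x * y) ∈ H) :
    ((∀ g : G, ∃! b : G, b ∈ B ∧ g * b⁻¹ ∈ H) ↔
      (∀ g : G, ∃! b : G, b ∈ (fun x : G => x⁻¹) '' B ∧ b⁻¹ * g ∈ H)) ∧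
    ((∀ g : G, ∃! b : G, b ∈ (fun x : G => x⁻¹) '' B ∧ b⁻¹ * g ∈ H) ↔
      (∀ x ∈ B, ∃! y : G, y ∈ B ∧ dot y x = 1)) := by
  have hinv : ∀ g : G, (∃! b, b ∈ (fun x : G => x⁻¹) '' B ∧ b⁻¹ * g ∈ H) ↔
      ∃! y, y ∈ B ∧ y * g ∈ H :=
    fun g => existsUnique_mem_image_inv_iff B (fun y => y * g ∈ H)
  simp only [hinv, H.existsUnique_mul_inv_mem_iff B]
  refine ⟨(inv_surjective.forall (p := fun g => ∃! y, y ∈ B ∧ y * g ∈ H)).symm, ?_⟩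
  rw [H.forall_existsUnique_mul_mem_iff B fun g => (htrans g).exists]
  refine forall₂_congr fun x hx => existsUnique_congr fun y => and_congr_right fun hy => ?_
  exact (H.dot_eq_one_iff_mul_mem B h1B htrans dot hdotB hdotH hy hx).symm
end

section
/- Let G be a group, H a subgroup of G, and B ⊆ G a unital left transversal of H, with induced operation · on B, action σ, and mapping m. Then for all x ∈ B and h ∈ H: m(x,1) = 1, m(1,h) = 1, and σ_{m(x,h)} = μ_x(σ_h), where μ_x(σ_h) = L_{σ_h(x)}⁻¹ ∘ σ_h ∘ L_x ∘ σ_h⁻¹ is the deviation of σ_h at x. -/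
/-!
Each side of each identity is the `B`-representative of a left coset of `H`, and a coset has only
one representative in `B`. So it suffices to compute cosets: `σ 1 x` and `x` both lie in `xH`,
`σ h 1` and `1` both lie in `hH = H`, and both sides of the third identity lie in `h x h⁻¹ y H`,
because `σ_k c ∈ k c H`, `a · c ∈ a c H`, and `c ∈ gH` implies `k c H = k g H`.
-/

def IsLeftCosetRep {G : Type*} [Group G] (B : Set G) (H : Subgroup G) (b g : G) : Prop :=
  b ∈ B ∧ b⁻¹ * g ∈ H

namespace IsLeftCosetRep

variable {G : Type*} [Group G] {B : Set G} {H : Subgroup G}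

theorem self {b : G} (hb : b ∈ B) : IsLeftCosetRep B H b b :=
  ⟨hb, by simp⟩

theorem mul_left_trans {f k c g : G} (hf : IsLeftCosetRep B H f (k * c))
    (hc : IsLeftCosetRep B H c g) : IsLeftCosetRep B H f (k * g) := by
  refine ⟨hf.1, ?_⟩
  have hfg : f⁻¹ * (k * g) = f⁻¹ * (k * c) * (c⁻¹ * g) := by group
  exact hfg ▸ H.mul_mem hf.2 hc.2

end IsLeftCosetRep

/-- Let `G` be a group, `H` a subgroup and `B ⊆ G` a unital left
transversal of `H`, with induced operation `dot`, action `σ`, and the mapping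
`m(x,h) = (σ h x)⁻¹ * h * x * h⁻¹ ∈ H`.  Then for all `x ∈ B` and `h ∈ H`:
`m(x,1) = 1`, `m(1,h) = 1`, and `σ (m(x,h)) = μ_x(σ h)`, the deviation
`L (σ h x)⁻¹ ∘ σ h ∘ L x ∘ (σ h)⁻¹` of `σ h` at `x` (expressed equivalently by
applying `L (σ h x)` to both sides and using `(σ h)⁻¹ = σ h⁻¹`). -/
theorem statement9 {G : Type*} [Group G] (H : Subgroup G) (B : Set G)
    (h1B : (1 : G) ∈ B)
    (htrans : ∀ g : G, ∃! b : G, b ∈ B ∧ b⁻¹ * g ∈ H)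
    (dot : G → G → G)
    (hdotB : ∀ x ∈ B, ∀ y ∈ B, dot x y ∈ B)
    (hdotH : ∀ x ∈ B, ∀ y ∈ B, (dot x y)⁻¹ * (x * y) ∈ H)
    (σ : G → G → G)
    (hσB : ∀ g : G, ∀ x ∈ B, σ g x ∈ B)
    (hσH : ∀ g : G, ∀ x ∈ B, (σ g x)⁻¹ * (g * x) ∈ H) :
    ∀ x ∈ B, ∀ h ∈ H,
      ((σ (1 : G) x)⁻¹ * 1 * x * (1 : G)⁻¹ = 1) ∧
      ((σ h 1)⁻¹ * h * 1 * h⁻¹ = 1) ∧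
      (∀ y ∈ B,
        dot (σ h x) (σ ((σ h x)⁻¹ * h * x * h⁻¹) y) = σ h (dot x (σ h⁻¹ y))) := by
  have rep_unique : ∀ {a b g : G}, IsLeftCosetRep B H a g → IsLeftCosetRep B H b g → a = b :=
    fun ha hb => (htrans _).unique ha hb
  have rep_σ : ∀ g, ∀ x ∈ B, IsLeftCosetRep B H (σ g x) (g * x) :=
    fun g x hx => ⟨hσB g x hx, hσH g x hx⟩
  have rep_dot : ∀ x ∈ B, ∀ y ∈ B, IsLeftCosetRep B H (dot x y) (x * y) :=
    fun x hx y hy => ⟨hdotB x hx y hy, hdotH x hx y hy⟩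
  intro x hx h hh
  refine ⟨?_, ?_, fun y hy => ?_⟩
  · have hσx : σ 1 x = x := rep_unique (rep_σ 1 x hx) (by simpa using IsLeftCosetRep.self hx)
    simp [hσx]
  · have hσ1 : σ h 1 = 1 := rep_unique (rep_σ h 1 h1B) ⟨h1B, by simpa using hh⟩
    simp [hσ1]
  · set a := σ h x
    have hlhs := (rep_dot a (hσB h x hx) _ (hσB _ y hy)).mul_left_trans
      (rep_σ (a⁻¹ * h * x * h⁻¹) y hy)
    have hrhs := (rep_σ h _ (hdotB x hx _ (hσB h⁻¹ y hy))).mul_left_trans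
      ((rep_dot x hx _ (hσB h⁻¹ y hy)).mul_left_trans (rep_σ h⁻¹ y hy))
    have hcoset : a * (a⁻¹ * h * x * h⁻¹ * y) = h * (x * (h⁻¹ * y)) := by group
    exact rep_unique (hcoset ▸ hlhs) hrhs
end

section
/- Let G be a group in which the squaring map g ↦ g² is injective, H a subgroup of G, and B ⊆ G a unital left transversal of H, with induced operation · on B. If the map τ : G → G defined by τ(ah) = a⁻¹h (a ∈ B, h ∈ H) is a semi-automorphism, i.e. τ(g₁g₂g₁) = τ(g₁)τ(g₂)τ(g₁) for all g₁,g₂ ∈ G, then (B,·) is a Bol loop, i.e. L_x ∘ L_y ∘ L_x = L_{x·(y·x)} for all x,y ∈ B. -/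
/-! Both sides of the Bol identity are representatives in `B` of cosets of `H`, and `dot` is
compatible with left multiplication on cosets, so `x·(y·(x·z))` represents `xyxzH` and
`x·(y·x)` represents `xyxH`. It therefore suffices that `xyx ∈ B`. Since `τ` fixes `B` up to
inversion and is a semi-automorphism, `τ(xyx) = (xyx)⁻¹`; writing `xyx = wh` with `w ∈ B`, this
reads `w⁻¹h = h⁻¹w⁻¹`, i.e. `(xyx)² = w²`, and injectivity of squaring gives `xyx = w ∈ B`. -/

section Transversal

variable {G : Type*} [Group G] {H : Subgroup G} {B : Set G}

theorem eq_of_inv_mul_mem_of_existsUnique (htrans : ∀ g : G, ∃! b : G, b ∈ B ∧ b⁻¹ * g ∈ H)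
    {g b₁ b₂ : G} (hb₁ : b₁ ∈ B) (hb₂ : b₂ ∈ B) (h₁ : b₁⁻¹ * g ∈ H) (h₂ : b₂⁻¹ * g ∈ H) :
    b₁ = b₂ :=
  (htrans g).unique ⟨hb₁, h₁⟩ ⟨hb₂, h₂⟩

theorem dot_inv_mul_mul_mem {dot : G → G → G}
    (hdotH : ∀ x ∈ B, ∀ y ∈ B, (dot x y)⁻¹ * (x * y) ∈ H)
    {x y g : G} (hx : x ∈ B) (hy : y ∈ B) (hg : y⁻¹ * g ∈ H) :
    (dot x y)⁻¹ * (x * g) ∈ H := by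
  have h : (dot x y)⁻¹ * (x * g) = (dot x y)⁻¹ * (x * y) * (y⁻¹ * g) := by group
  rw [h]
  exact H.mul_mem (hdotH x hx y hy) hg

theorem mem_of_map_eq_inv (hB : ∀ g : G, ∃ b ∈ B, b⁻¹ * g ∈ H)
    (hsq : Function.Injective (fun g : G => g * g)) {τ : G → G}
    (hτ : ∀ a ∈ B, ∀ h ∈ H, τ (a * h) = a⁻¹ * h) {g : G} (hg : τ g = g⁻¹) : g ∈ B := by
  obtain ⟨w, hwB, hwH⟩ := hB g
  have hτg : τ g = w⁻¹ * (w⁻¹ * g) := by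
    simpa only [mul_inv_cancel_left] using hτ w hwB _ hwH
  have hsq_eq : g * g = w * w := calc
    g * g = w * w * (w⁻¹ * (w⁻¹ * g) * g) := by group
    _ = w * w := by rw [← hτg, hg, inv_mul_cancel, mul_one]
  exact hsq hsq_eq ▸ hwB

end Transversal

theorem statement10_general {G : Type*} [Group G] (H : Subgroup G) (B : Set G)
    (htrans : ∀ g : G, ∃! b : G, b ∈ B ∧ b⁻¹ * g ∈ H)
    (dot : G → G → G)
    (hdotB : ∀ x ∈ B, ∀ y ∈ B, dot x y ∈ B)
    (hdotH : ∀ x ∈ B, ∀ y ∈ B, (dot x y)⁻¹ * (x * y) ∈ H)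
    (hsq : Function.Injective (fun g : G => g * g))
    (τ : G → G)
    (hτ : ∀ a ∈ B, ∀ h ∈ H, τ (a * h) = a⁻¹ * h)
    (hsemi : ∀ g₁ g₂ : G, τ (g₁ * g₂ * g₁) = τ g₁ * τ g₂ * τ g₁) :
    ∀ x ∈ B, ∀ y ∈ B, ∀ z ∈ B,
      dot x (dot y (dot x z)) = dot (dot x (dot y x)) z := by
  intro x hx y hy z hz
  have hτB : ∀ b ∈ B, τ b = b⁻¹ := fun b hb => by
    simpa only [mul_one] using hτ b hb 1 H.one_mem
  have hxyx : x * y * x ∈ B := by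
    refine mem_of_map_eq_inv (fun g => (htrans g).exists) hsq hτ ?_
    rw [hsemi, hτB x hx, hτB y hy]
    group
  have hyx := hdotB y hy x hx
  have hxz := hdotB x hx z hz
  have hdot_xyx : dot x (dot y x) = x * y * x := by
    refine eq_of_inv_mul_mem_of_existsUnique htrans (hdotB x hx _ hyx) hxyx
      (dot_inv_mul_mul_mem hdotH hx hyx (hdotH y hy x hx)) ?_
    rw [← mul_assoc x y x, inv_mul_cancel]
    exact H.one_mem
  rw [hdot_xyx]
  refine eq_of_inv_mul_mem_of_existsUnique htrans
    (hdotB x hx _ (hdotB y hy _ hxz)) (hdotB _ hxyx z hz) ?_ (hdotH _ hxyx z hz)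
  simpa only [mul_assoc] using dot_inv_mul_mul_mem hdotH hx (hdotB y hy _ hxz)
    (dot_inv_mul_mul_mem hdotH hy hxz (hdotH x hx z hz))

/-- Let `G` be a group in which squaring `g ↦ g*g` is
injective, `H` a subgroup, and `B ⊆ G` a unital left transversal of `H` with
induced operation `dot`.  If the map `τ : G → G` defined on the unique
factorization by `τ (a*h) = a⁻¹*h` (`a ∈ B`, `h ∈ H`) is a semi-automorphism,
i.e. `τ (g₁*g₂*g₁) = τ g₁ * τ g₂ * τ g₁` for all `g₁, g₂ ∈ G`, then `(B, dot)`
is a Bol loop: `L x ∘ L y ∘ L x = L (x·(y·x))` pointwise on `B`. -/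
theorem statement10 {G : Type*} [Group G] (H : Subgroup G) (B : Set G)
    (h1B : (1 : G) ∈ B)
    (htrans : ∀ g : G, ∃! b : G, b ∈ B ∧ b⁻¹ * g ∈ H)
    (dot : G → G → G)
    (hdotB : ∀ x ∈ B, ∀ y ∈ B, dot x y ∈ B)
    (hdotH : ∀ x ∈ B, ∀ y ∈ B, (dot x y)⁻¹ * (x * y) ∈ H)
    (hsq : Function.Injective (fun g : G => g * g))
    (τ : G → G)
    (hτ : ∀ a ∈ B, ∀ h ∈ H, τ (a * h) = a⁻¹ * h)
    (hsemi : ∀ g₁ g₂ : G, τ (g₁ * g₂ * g₁) = τ g₁ * τ g₂ * τ g₁) :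
    ∀ x ∈ B, ∀ y ∈ B, ∀ z ∈ B,
      dot x (dot y (dot x z)) = dot (dot x (dot y x)) z :=
  statement10_general H B htrans dot hdotB hdotH hsq τ hτ hsemi
end

section
/- Let G be a group, H a subgroup of G, and B ⊆ G a unital left transversal of H, with induced operation · on B. Then the homomorphism σ : G → Sym(B), g ↦ σ_g, is injective with image equal to LMlt(B,·) (so σ is an isomorphism from G onto LMlt(B,·)) if and only if the normal core of H in G is trivial and G is generated by B. -/
/-!
Since `σ_g x` is the representative of `g x H`, the element `g` acts trivially exactly when
`x⁻¹ g x ∈ H` for every `x ∈ B`; as every coset has a representative in `B`, this says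
`g ∈ core_G(H)`, so `ker σ = core_G(H)`. Moreover `L_x = σ_x` for `x ∈ B`, hence
`LMlt(B,·) = σ(⟨B⟩)`, and for injective `σ` this equals `σ(G)` iff `⟨B⟩ = G`.
-/

theorem MonoidHom.range_eq_map_iff_of_injective {G N : Type*} [Group G] [Group N]
    {f : G →* N} (hf : Function.Injective f) (S : Subgroup G) :
    f.range = S.map f ↔ S = ⊤ := by
  rw [f.range_eq_map, (Subgroup.map_injective hf).eq_iff, eq_comm]

namespace Transversal

variable {G : Type*} [Group G] {H : Subgroup G} {B : Set G}

theorem eq_of_inv_mul_mem (htrans : ∀ g : G, ∃! b : G, b ∈ B ∧ b⁻¹ * g ∈ H) {g : G}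
    {b b' : B} (hb : (b : G)⁻¹ * g ∈ H) (hb' : (b' : G)⁻¹ * g ∈ H) : b = b' :=
  Subtype.ext ((htrans g).unique ⟨b.2, hb⟩ ⟨b'.2, hb'⟩)

theorem ker_eq_normalCore (htrans : ∀ g : G, ∃! b : G, b ∈ B ∧ b⁻¹ * g ∈ H)
    (σ : G →* Equiv.Perm B) (hσH : ∀ (g : G) (x : B), (σ g x : G)⁻¹ * (g * x) ∈ H) :
    σ.ker = H.normalCore := by
  ext g
  rw [MonoidHom.mem_ker]
  constructor
  · intro hg k
    obtain ⟨b, ⟨hbB, hbk⟩, -⟩ := htrans k⁻¹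
    have hb : b⁻¹ * (g * b) ∈ H := by simpa [hg] using hσH g ⟨b, hbB⟩
    have hconj : k * g * k⁻¹ = (b⁻¹ * k⁻¹)⁻¹ * (b⁻¹ * (g * b)) * (b⁻¹ * k⁻¹) := by group
    rw [hconj]
    exact H.mul_mem (H.mul_mem (H.inv_mem hbk) hb) hbk
  · intro hg
    ext x
    have hx : (x : G)⁻¹ * (g * x) ∈ H := by
      simpa [mul_assoc] using (show g ∈ H.normalCore from hg) (x : G)⁻¹
    exact congrArg Subtype.val (eq_of_inv_mul_mem htrans (hσH g x) hx)

theorem range_leftTranslations_eq_image (htrans : ∀ g : G, ∃! b : G, b ∈ B ∧ b⁻¹ * g ∈ H)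
    (σ : G → Equiv.Perm B) (hσH : ∀ (g : G) (x : B), (σ g x : G)⁻¹ * (g * x) ∈ H)
    (L : B → Equiv.Perm B) (hLH : ∀ x y : B, (L x y : G)⁻¹ * ((x : G) * (y : G)) ∈ H) :
    Set.range L = σ '' B := by
  have hLσ : ∀ x : B, L x = σ x := fun x =>
    Equiv.ext fun y => eq_of_inv_mul_mem htrans (hLH x y) (hσH x y)
  ext p
  constructor
  · rintro ⟨x, rfl⟩
    exact ⟨x, x.2, (hLσ x).symm⟩
  · rintro ⟨g, hg, rfl⟩
    exact ⟨⟨g, hg⟩, hLσ ⟨g, hg⟩⟩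

end Transversal

open Transversal in
theorem statement11_general {G : Type*} [Group G] (H : Subgroup G) (B : Set G)
    (htrans : ∀ g : G, ∃! b : G, b ∈ B ∧ b⁻¹ * g ∈ H)
    (σ : G → Equiv.Perm B)
    (hσhom : ∀ g g' : G, σ (g * g') = σ g * σ g')
    (hσH : ∀ (g : G) (x : B), (σ g x : G)⁻¹ * (g * (x : G)) ∈ H)
    (L : B → Equiv.Perm B)
    (hLH : ∀ x y : B, (L x y : G)⁻¹ * ((x : G) * (y : G)) ∈ H) :
    (Function.Injective σ ∧
        Set.range σ = (Subgroup.closure (Set.range L) : Subgroup (Equiv.Perm B))) ↔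
      (H.normalCore = ⊥ ∧ Subgroup.closure B = ⊤) := by
  set f := MonoidHom.mk' σ hσhom
  have hinj : Function.Injective σ ↔ H.normalCore = ⊥ := by
    rw [← ker_eq_normalCore htrans f hσH]
    exact f.ker_eq_bot_iff.symm
  have hLMlt : Subgroup.closure (Set.range L) = (Subgroup.closure B).map f := by
    rw [range_leftTranslations_eq_image htrans σ hσH L hLH, MonoidHom.map_closure]
    rfl
  have hrange : Set.range σ = f.range := (f.coe_range).symm
  rw [hLMlt, hrange, SetLike.coe_set_eq]
  constructor
  · rintro ⟨hσinj, hmap⟩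
    exact ⟨hinj.mp hσinj, (f.range_eq_map_iff_of_injective hσinj _).mp hmap⟩
  · rintro ⟨hcore, hB⟩
    exact ⟨hinj.mpr hcore, by rw [hB, f.range_eq_map]⟩

/-- Let `G` be a group, `H` a subgroup and `B ⊆ G` a unital
left transversal of `H`.  Let `σ : G → Sym(B)` be the action homomorphism
(`σ g x` is the unique element of `B` with `(σ g x)H = gxH`), and let
`L : B → Sym(B)` be the left translations of the induced loop operation
(`L x y` is the unique element of `B` with `(L x y)H = xyH`).  Then `σ` is
injective with image equal to `LMlt(B,·) = ⟨L x : x ∈ B⟩` (i.e. `σ` is an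
isomorphism of `G` onto `LMlt(B,·)`) if and only if the normal core of `H` in
`G` is trivial and `G` is generated by `B`. -/
theorem statement11 {G : Type*} [Group G] (H : Subgroup G) (B : Set G)
    (h1B : (1 : G) ∈ B)
    (htrans : ∀ g : G, ∃! b : G, b ∈ B ∧ b⁻¹ * g ∈ H)
    (σ : G → Equiv.Perm B)
    (hσhom : ∀ g g' : G, σ (g * g') = σ g * σ g')
    (hσH : ∀ (g : G) (x : B), (σ g x : G)⁻¹ * (g * (x : G)) ∈ H)
    (L : B → Equiv.Perm B)
    (hLH : ∀ x y : B, (L x y : G)⁻¹ * ((x : G) * (y : G)) ∈ H) :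
    (Function.Injective σ ∧
        Set.range σ = (Subgroup.closure (Set.range L) : Subgroup (Equiv.Perm B))) ↔
      (H.normalCore = ⊥ ∧ Subgroup.closure B = ⊤) :=
  statement11_general H B htrans σ hσhom hσH L hLH
end

section
/- Let (B,·) be a left loop satisfying L_x ∘ L_y ∘ L_y ∘ L_x = L_{x·y} ∘ L_{x·y} for all x,y ∈ B. Then (B,·) has the left inverse property (L_x⁻¹ = L_{x^ρ} for all x ∈ B) if and only if (B,·) has the automorphic inverse property ((x·y)^ρ = x^ρ·y^ρ for all x,y ∈ B). -/
/-!
Inverting the identity `L x * L y * L y * L x = L (x*y) * L (x*y)` and evaluating at `x*y` gives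
`(x*y)^ρ = L_x⁻¹ (y^ρ)`. With the left inverse property the right side is `x^ρ * y^ρ`. Conversely,
taking `y = x^ρ` shows `(x^ρ)^ρ = x`, so every `z` is `(z^ρ)^ρ`, and then
`L_x⁻¹ z = (x * z^ρ)^ρ = x^ρ * z`.
-/

namespace LeftLoop

variable {B : Type*} [Mul B] [One B] {L : B → Equiv.Perm B}

theorem apply_one (mul_one' : ∀ x : B, x * 1 = x) (hL : ∀ x y : B, L x y = x * y) (z : B) :
    L z 1 = z := by
  rw [hL, mul_one']

theorem inv_apply_self (mul_one' : ∀ x : B, x * 1 = x) (hL : ∀ x y : B, L x y = x * y) (z : B) :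
    (L z)⁻¹ z = 1 := by
  rw [Equiv.Perm.inv_eq_iff_eq, apply_one mul_one' hL]

theorem rightInv_mul (mul_one' : ∀ x : B, x * 1 = x) (hL : ∀ x y : B, L x y = x * y)
    (hbr : ∀ x y : B, L x * L y * L y * L x = L (x * y) * L (x * y)) (x y : B) :
    (L (x * y))⁻¹ 1 = (L x)⁻¹ ((L y)⁻¹ 1) := by
  have h := congrArg (fun σ : Equiv.Perm B => σ⁻¹ (x * y)) (hbr x y)
  have hx : (L x)⁻¹ (x * y) = y := by rw [Equiv.Perm.inv_eq_iff_eq, hL]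
  simp only [mul_inv_rev, Equiv.Perm.mul_apply] at h
  rw [inv_apply_self mul_one' hL, hx, inv_apply_self mul_one' hL] at h
  exact h.symm

theorem rightInv_rightInv (mul_one' : ∀ x : B, x * 1 = x) (hL : ∀ x y : B, L x y = x * y)
    (hbr : ∀ x y : B, L x * L y * L y * L x = L (x * y) * L (x * y)) (x : B) :
    (L ((L x)⁻¹ 1))⁻¹ 1 = x := by
  have hx : x * (L x)⁻¹ 1 = 1 := by rw [← hL]; exact (L x).apply_symm_apply 1
  have h := rightInv_mul mul_one' hL hbr x ((L x)⁻¹ 1)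
  rw [hx, inv_apply_self mul_one' hL, eq_comm, Equiv.Perm.inv_eq_iff_eq,
    apply_one mul_one' hL] at h
  exact h

end LeftLoop

theorem statement12_general {B : Type*} [Mul B] [One B]
    (mul_one' : ∀ x : B, x * 1 = x)
    (L : B → Equiv.Perm B) (hL : ∀ x y : B, L x y = x * y)
    (hbr : ∀ x y : B, L x * L y * L y * L x = L (x * y) * L (x * y)) :
    (∀ x : B, (L x)⁻¹ = L ((L x)⁻¹ 1)) ↔
    (∀ x y : B, (L (x * y))⁻¹ 1 = ((L x)⁻¹ 1) * ((L y)⁻¹ 1)) := by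
  have hmul := LeftLoop.rightInv_mul mul_one' hL hbr
  have hinvol := LeftLoop.rightInv_rightInv mul_one' hL hbr
  constructor
  · intro hlip x y
    rw [hmul, hlip x, hL, LeftLoop.apply_one mul_one' hL]
  · intro haip x
    ext z
    calc (L x)⁻¹ z = (L x)⁻¹ ((L ((L z)⁻¹ 1))⁻¹ 1) := by rw [hinvol]
      _ = (L x)⁻¹ 1 * z := by rw [← hmul, haip, hinvol]
      _ = L ((L x)⁻¹ 1) z := (hL _ _).symm

/-- Let `(B,·)` be a left loop satisfying
`L x * L y * L y * L x = L (x*y) * L (x*y)` for all `x, y ∈ B`.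
Then `(B,·)` has the left inverse property (`(L x)⁻¹ = L (x^ρ)`, where
`x^ρ = (L x)⁻¹ 1` is the right inverse of `x`) if and only if it has the
automorphic inverse property (`(x·y)^ρ = x^ρ · y^ρ` for all `x, y ∈ B`). -/
theorem statement12 {B : Type*} [Mul B] [One B]
    (one_mul' : ∀ x : B, 1 * x = x) (mul_one' : ∀ x : B, x * 1 = x)
    (L : B → Equiv.Perm B) (hL : ∀ x y : B, L x y = x * y)
    (hbr : ∀ x y : B, L x * L y * L y * L x = L (x * y) * L (x * y)) :
    (∀ x : B, (L x)⁻¹ = L ((L x)⁻¹ 1)) ↔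
    (∀ x y : B, (L (x * y))⁻¹ 1 = ((L x)⁻¹ 1) * ((L y)⁻¹ 1)) :=
  statement12_general mul_one' L hL hbr
end

section
/- Let (B,·) be a left loop satisfying the left alternative property (L_x ∘ L_x = L_{x·x} for all x ∈ B) and the identity x·(y·(y·x)) = (x·y)·(x·y) for all x,y ∈ B. Then (B,·) satisfies L_x ∘ L_y ∘ L_y ∘ L_x = L_{x·y} ∘ L_{x·y} for all x,y ∈ B if and only if it satisfies L_x ∘ L_{y·y} ∘ L_x = L_{x·((y·y)·x)} for all x,y ∈ B. -/
/-!
Under the left alternative property `L x * L x = L (x * x)`, the two identities have the same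
left-hand side, `L x * L y * L y * L x = L x * L (y * y) * L x`, and, using
`x·(y·(y·x)) = (x·y)·(x·y)`, the same right-hand side,
`L (x * y) * L (x * y) = L ((x * y) * (x * y)) = L (x * (y * (y * x))) = L (x * ((y * y) * x))`.
-/

section LeftAlternative

variable {B : Type*} [Mul B] {L : B → Equiv.Perm B}

theorem mul_mul_eq_mul_self_mul_of_leftAlternative (hL : ∀ x y : B, L x y = x * y)
    (hLAP : ∀ x : B, L x * L x = L (x * x)) (x y : B) : x * (x * y) = (x * x) * y := by
  simpa only [Equiv.Perm.mul_apply, hL] using congr_arg (· y) (hLAP x)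

theorem perm_mul_mul_mul_eq_of_leftAlternative (hLAP : ∀ x : B, L x * L x = L (x * x))
    (x y : B) : L x * L y * L y * L x = L x * L (y * y) * L x := by
  rw [← hLAP, ← mul_assoc]

theorem perm_mul_self_eq_of_leftAlternative (hL : ∀ x y : B, L x y = x * y)
    (hLAP : ∀ x : B, L x * L x = L (x * x))
    (hbr2 : ∀ x y : B, x * (y * (y * x)) = (x * y) * (x * y)) (x y : B) :
    L (x * y) * L (x * y) = L (x * ((y * y) * x)) := by
  rw [hLAP, ← hbr2, mul_mul_eq_mul_self_mul_of_leftAlternative hL hLAP]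

end LeftAlternative

theorem statement13_general {B : Type*} [Mul B]
    (L : B → Equiv.Perm B) (hL : ∀ x y : B, L x y = x * y)
    (hLAP : ∀ x : B, L x * L x = L (x * x))
    (hbr2 : ∀ x y : B, x * (y * (y * x)) = (x * y) * (x * y)) :
    (∀ x y : B, L x * L y * L y * L x = L (x * y) * L (x * y)) ↔
    (∀ x y : B, L x * L (y * y) * L x = L (x * ((y * y) * x))) := by
  simp only [perm_mul_mul_mul_eq_of_leftAlternative hLAP,
    perm_mul_self_eq_of_leftAlternative hL hLAP hbr2]

/-- Let `(B,·)` be a left loop satisfying the left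
alternative property (`L x * L x = L (x*x)`) and the identity
`x·(y·(y·x)) = (x·y)·(x·y)` for all `x, y ∈ B`.  Then
`L x * L y * L y * L x = L (x*y) * L (x*y)` holds for all `x, y ∈ B`
if and only if `L x * L (y*y) * L x = L (x·((y·y)·x))` holds for all `x, y ∈ B`. -/
theorem statement13 {B : Type*} [Mul B] [One B]
    (one_mul' : ∀ x : B, 1 * x = x) (mul_one' : ∀ x : B, x * 1 = x)
    (L : B → Equiv.Perm B) (hL : ∀ x y : B, L x y = x * y)
    (hLAP : ∀ x : B, L x * L x = L (x * x))
    (hbr2 : ∀ x y : B, x * (y * (y * x)) = (x * y) * (x * y)) :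
    (∀ x y : B, L x * L y * L y * L x = L (x * y) * L (x * y)) ↔
    (∀ x y : B, L x * L (y * y) * L x = L (x * ((y * y) * x))) :=
  statement13_general L hL hLAP hbr2
end

section
/- Let (B,·) be a Bol loop, i.e. a left loop satisfying L_x ∘ L_y ∘ L_x = L_{x·(y·x)} for all x,y ∈ B. Then (B,·) has the automorphic inverse property ((x·y)^ρ = x^ρ·y^ρ for all x,y ∈ B) if and only if it satisfies L_x ∘ L_y ∘ L_y ∘ L_x = L_{x·y} ∘ L_{x·y} for all x,y ∈ B. -/
/-!
Write `xᵖ = (L x)⁻¹ 1`. A Bol loop has the left inverse property `L xᵖ = (L x)⁻¹`, so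
`xᵖ · yᵖ = (L x)⁻¹ (L y)⁻¹ 1`, and this element is sent to `x · y` by
`L x L y L y L x = L (x · (y y · x))`.

If `L x L y L y L x = L (x y) L (x y)`, this says `L (x y)` sends `xᵖ · yᵖ` to `1`,
i.e. `(x y)ᵖ = xᵖ · yᵖ`. Conversely, under the automorphic inverse property
`(xᵖ · yᵖ)ᵖ = x y`; and in a Bol loop `m · a = aᵖ` forces
`L a L m L a = L (a · aᵖ) = 1`, i.e. `L m = L aᵖ L aᵖ`.
With `a = xᵖ · yᵖ` and `m = x · (y y · x)` this is the identity.
-/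

namespace BolLoop

variable {B : Type*} [Mul B] [One B] (L : B → Equiv.Perm B)

theorem mul_inv_apply_one (hL : ∀ x y : B, L x y = x * y) (x : B) :
    x * (L x)⁻¹ 1 = 1 := by
  rw [← hL]
  exact (L x).apply_symm_apply 1

theorem L_one (one_mul' : ∀ x : B, 1 * x = x) (hL : ∀ x y : B, L x y = x * y) :
    L 1 = 1 :=
  Equiv.ext fun z => by rw [hL, one_mul']; rfl

theorem L_inv_apply_one (mul_one' : ∀ x : B, x * 1 = x) (hL : ∀ x y : B, L x y = x * y)
    (hBol : ∀ x y : B, L x * L y * L x = L (x * (y * x))) (x : B) :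
    L ((L x)⁻¹ 1) = (L x)⁻¹ := by
  have h := hBol ((L x)⁻¹ 1) x
  rw [mul_inv_apply_one L hL, mul_one'] at h
  exact eq_inv_of_mul_eq_one_left (mul_eq_right.mp h)

theorem inv_apply_one_inv_apply_one (mul_one' : ∀ x : B, x * 1 = x)
    (hL : ∀ x y : B, L x y = x * y) (hBol : ∀ x y : B, L x * L y * L x = L (x * (y * x)))
    (x : B) : (L ((L x)⁻¹ 1))⁻¹ 1 = x := by
  rw [L_inv_apply_one L mul_one' hL hBol, inv_inv, hL, mul_one']

theorem inv_apply_one_mul_inv_apply_one (mul_one' : ∀ x : B, x * 1 = x)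
    (hL : ∀ x y : B, L x y = x * y) (hBol : ∀ x y : B, L x * L y * L x = L (x * (y * x)))
    (x y : B) : (L x)⁻¹ 1 * (L y)⁻¹ 1 = (L x)⁻¹ ((L y)⁻¹ 1) := by
  rw [← hL, L_inv_apply_one L mul_one' hL hBol]

theorem L_mul_L_self (one_mul' : ∀ x : B, 1 * x = x) (hL : ∀ x y : B, L x y = x * y)
    (hBol : ∀ x y : B, L x * L y * L x = L (x * (y * x)))
    (y : B) : L y * L y = L (y * y) := by
  simpa only [L_one L one_mul' hL, mul_one, one_mul'] using hBol y 1

theorem L_mul_L_sq_mul_L_apply (mul_one' : ∀ x : B, x * 1 = x)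
    (hL : ∀ x y : B, L x y = x * y) (x y : B) :
    (L x * L y * L y * L x) ((L x)⁻¹ ((L y)⁻¹ 1)) = x * y := by
  simp only [Equiv.Perm.mul_apply, Equiv.Perm.coe_inv, Equiv.apply_symm_apply]
  rw [hL y, mul_one', hL]

theorem L_eq_of_mul_eq_inv_apply_one (one_mul' : ∀ x : B, 1 * x = x)
    (mul_one' : ∀ x : B, x * 1 = x) (hL : ∀ x y : B, L x y = x * y)
    (hBol : ∀ x y : B, L x * L y * L x = L (x * (y * x))) {a m : B}
    (h : m * a = (L a)⁻¹ 1) : L m = L ((L a)⁻¹ 1) * L ((L a)⁻¹ 1) := by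
  have hBol' : L a * L m * L a = 1 := by
    rw [hBol, h, mul_inv_apply_one L hL, L_one L one_mul' hL]
  rw [L_inv_apply_one L mul_one' hL hBol]
  calc L m = (L a)⁻¹ * (L a * L m * L a) * (L a)⁻¹ := by group
    _ = (L a)⁻¹ * (L a)⁻¹ := by rw [hBol', mul_one]

end BolLoop

open BolLoop in
/-- Let `(B,·)` be a (left) Bol loop, i.e. a left loop
satisfying `L x * L y * L x = L (x·(y·x))` for all `x, y ∈ B`.  Then `(B,·)`
has the automorphic inverse property (`(x·y)^ρ = x^ρ · y^ρ`, where
`x^ρ = (L x)⁻¹ 1`) if and only if it satisfies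
`L x * L y * L y * L x = L (x·y) * L (x·y)` for all `x, y ∈ B`. -/
theorem statement14 {B : Type*} [Mul B] [One B]
    (one_mul' : ∀ x : B, 1 * x = x) (mul_one' : ∀ x : B, x * 1 = x)
    (L : B → Equiv.Perm B) (hL : ∀ x y : B, L x y = x * y)
    (hBol : ∀ x y : B, L x * L y * L x = L (x * (y * x))) :
    (∀ x y : B, (L (x * y))⁻¹ 1 = ((L x)⁻¹ 1) * ((L y)⁻¹ 1)) ↔
    (∀ x y : B, L x * L y * L y * L x = L (x * y) * L (x * y)) := by
  have hprod := inv_apply_one_mul_inv_apply_one L mul_one' hL hBol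
  have happly := L_mul_L_sq_mul_L_apply L mul_one' hL
  constructor
  · intro hAIP x y
    have hm : L x * L y * L y * L x = L (x * ((y * y) * x)) := by
      rw [mul_assoc (L x), L_mul_L_self L one_mul' hL hBol, hBol]
    have hρ : (L ((L x)⁻¹ ((L y)⁻¹ 1)))⁻¹ 1 = x * y := by
      rw [← hprod, hAIP, inv_apply_one_inv_apply_one L mul_one' hL hBol,
        inv_apply_one_inv_apply_one L mul_one' hL hBol]
    have hma : x * ((y * y) * x) * (L x)⁻¹ ((L y)⁻¹ 1) = x * y := by
      rw [← hL, ← hm, happly]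
    rw [hm, L_eq_of_mul_eq_inv_apply_one L one_mul' mul_one' hL hBol (hma.trans hρ.symm), hρ]
  · intro hsq x y
    have hfix : L (x * y) (L (x * y) ((L x)⁻¹ ((L y)⁻¹ 1))) = L (x * y) 1 := by
      rw [← Equiv.Perm.mul_apply, ← hsq, happly, hL, mul_one']
    rw [hprod, Equiv.Perm.inv_eq_iff_eq]
    exact ((L (x * y)).injective hfix).symm
end

section
/- Let G be a group, H a subgroup of G, and B ⊆ G a unital left transversal of H, with induced operation · on B, and let N = core_G(H) be the normal core of H in G, with BN = {bn : b ∈ B, n ∈ N}. Then the following are equivalent: (i) xBx ⊆ BN for all x ∈ B, i.e. xyx ∈ BN for all x,y ∈ B; (ii) in the quotient group G/N, (xN)(yN)(xN) ∈ {bN : b ∈ B} for all x,y ∈ B; (iii) (B,·) is a Bol loop, i.e. L_x ∘ L_y ∘ L_x = L_{x·(y·x)} for all x,y ∈ B. -/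
/-!
`B` maps bijectively onto `G ⧸ H`, and `dot x y` is the representative in `B` of the coset
`x • yH`. Hence `dot x (dot y (dot x z))` represents `(x * y * x) • zH`, while `dot q z` with
`q = dot x (dot y x)` represents `q • zH`, and `q` itself represents `x * y * x`. The Bol identity
at `x, y` thus says that `q⁻¹ * (x * y * x)` fixes every coset, i.e. lies in the normal core `N`,
which is the kernel of the action on `G ⧸ H`; and, since `q` is the only candidate, that is
exactly `x * y * x ∈ B * N`, i.e. `(xN)(yN)(xN) ∈ BN/N`.
-/

open Set

namespace Subgroup

variable {G : Type*} [Group G] {H : Subgroup G} {B : Set G} {dot : G → G → G}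

theorem bijOn_mk_of_existsUnique (htrans : ∀ g : G, ∃! b : G, b ∈ B ∧ b⁻¹ * g ∈ H) :
    BijOn (QuotientGroup.mk : G → G ⧸ H) B univ := by
  refine ⟨mapsTo_univ _ _, fun b hb b' hb' hbb' => ?_, fun q _ => ?_⟩
  · exact (htrans b).unique ⟨hb, by simp⟩ ⟨hb', QuotientGroup.eq.mp hbb'.symm⟩
  · induction q using QuotientGroup.induction_on with
    | H g =>
      obtain ⟨b, ⟨hb, hbg⟩, -⟩ := htrans g
      exact ⟨b, hb, QuotientGroup.eq.mpr hbg⟩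

theorem mem_normalCore_iff_forall_smul_eq {g : G} :
    g ∈ H.normalCore ↔ ∀ q : G ⧸ H, g • q = q := by
  rw [normalCore_eq_ker, MonoidHom.mem_ker, Equiv.Perm.ext_iff]
  rfl

theorem mem_normalCore_iff_forall_mem_smul_eq
    (hB : SurjOn (QuotientGroup.mk : G → G ⧸ H) B univ) {g : G} :
    g ∈ H.normalCore ↔ ∀ b ∈ B, g • (b : G ⧸ H) = b := by
  rw [mem_normalCore_iff_forall_smul_eq]
  refine ⟨fun h b _ => h b, fun h q => ?_⟩
  obtain ⟨b, hb, rfl⟩ := hB (mem_univ q)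
  exact h b hb

theorem exists_mem_eq_mul_iff {N : Subgroup G} {b g : G} :
    (∃ n ∈ N, g = b * n) ↔ b⁻¹ * g ∈ N :=
  ⟨fun ⟨n, hn, h⟩ => by rwa [h, inv_mul_cancel_left],
    fun h => ⟨_, h, (mul_inv_cancel_left b g).symm⟩⟩

theorem exists_mem_eq_mul_iff_exists_mk_eq {N : Subgroup G} {g : G} :
    (∃ b ∈ B, ∃ n ∈ N, g = b * n) ↔ ∃ b ∈ B, (g : G ⧸ N) = b := by
  simp only [exists_mem_eq_mul_iff, eq_comm (a := (g : G ⧸ N)), QuotientGroup.eq]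

theorem exists_mem_eq_mul_iff_of_mk_eq (hB : InjOn (QuotientGroup.mk : G → G ⧸ H) B)
    {N : Subgroup G} (hN : N ≤ H) {b₀ g : G} (hb₀ : b₀ ∈ B) (hg : (b₀ : G ⧸ H) = g) :
    (∃ b ∈ B, ∃ n ∈ N, g = b * n) ↔ b₀⁻¹ * g ∈ N := by
  refine ⟨fun ⟨b, hb, hbg⟩ => ?_, fun h => ⟨b₀, hb₀, exists_mem_eq_mul_iff.mpr h⟩⟩
  have hbN := exists_mem_eq_mul_iff.mp hbg
  have hb_eq : b = b₀ := hB hb hb₀ (hg.symm ▸ QuotientGroup.eq.mpr (hN hbN))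
  rwa [← hb_eq]

theorem mk_dot (hdotH : ∀ x ∈ B, ∀ y ∈ B, (dot x y)⁻¹ * (x * y) ∈ H) {x y : G}
    (hx : x ∈ B) (hy : y ∈ B) : (dot x y : G ⧸ H) = x • (y : G ⧸ H) :=
  QuotientGroup.eq.mpr (hdotH x hx y hy)

theorem mk_dot_dot (hdotB : ∀ x ∈ B, ∀ y ∈ B, dot x y ∈ B)
    (hdotH : ∀ x ∈ B, ∀ y ∈ B, (dot x y)⁻¹ * (x * y) ∈ H) {x y : G} (hx : x ∈ B)
    (hy : y ∈ B) : (dot x (dot y x) : G ⧸ H) = (x * y * x : G) := by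
  rw [mk_dot hdotH hx (hdotB y hy x hx), mk_dot hdotH hy hx, smul_smul]
  rfl

theorem bol_iff_mem_normalCore (hdotB : ∀ x ∈ B, ∀ y ∈ B, dot x y ∈ B)
    (hdotH : ∀ x ∈ B, ∀ y ∈ B, (dot x y)⁻¹ * (x * y) ∈ H)
    (hB : BijOn (QuotientGroup.mk : G → G ⧸ H) B univ) {x y : G} (hx : x ∈ B) (hy : y ∈ B) :
    (∀ z ∈ B, dot x (dot y (dot x z)) = dot (dot x (dot y x)) z) ↔
      (dot x (dot y x))⁻¹ * (x * y * x) ∈ H.normalCore := by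
  have hq : dot x (dot y x) ∈ B := hdotB x hx _ (hdotB y hy x hx)
  rw [mem_normalCore_iff_forall_mem_smul_eq hB.surjOn]
  refine forall₂_congr fun z hz => ?_
  have hxz := hdotB x hx z hz
  rw [← hB.injOn.eq_iff (hdotB x hx _ (hdotB y hy _ hxz)) (hdotB _ hq z hz),
    mk_dot hdotH hx (hdotB y hy _ hxz), mk_dot hdotH hy hxz, mk_dot hdotH hx hz,
    mk_dot hdotH hq hz, mul_smul, inv_smul_eq_iff, mul_smul, mul_smul]

end Subgroup

open Subgroup

theorem statement15_general {G : Type*} [Group G] (H : Subgroup G) (B : Set G)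
    (htrans : ∀ g : G, ∃! b : G, b ∈ B ∧ b⁻¹ * g ∈ H)
    (dot : G → G → G)
    (hdotB : ∀ x ∈ B, ∀ y ∈ B, dot x y ∈ B)
    (hdotH : ∀ x ∈ B, ∀ y ∈ B, (dot x y)⁻¹ * (x * y) ∈ H) :
    ((∀ x ∈ B, ∀ y ∈ B, ∃ b ∈ B, ∃ n ∈ H.normalCore, x * y * x = b * n) ↔
      (∀ x ∈ B, ∀ y ∈ B, ∃ b ∈ B,
        (x : G ⧸ H.normalCore) * (y : G ⧸ H.normalCore) * (x : G ⧸ H.normalCore)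
          = (b : G ⧸ H.normalCore))) ∧
    ((∀ x ∈ B, ∀ y ∈ B, ∃ b ∈ B,
        (x : G ⧸ H.normalCore) * (y : G ⧸ H.normalCore) * (x : G ⧸ H.normalCore)
          = (b : G ⧸ H.normalCore)) ↔
      (∀ x ∈ B, ∀ y ∈ B, ∀ z ∈ B,
        dot x (dot y (dot x z)) = dot (dot x (dot y x)) z)) := by
  have hB := bijOn_mk_of_existsUnique htrans
  have h12 := forall₄_congr fun x (_ : x ∈ B) y (_ : y ∈ B) =>
    exists_mem_eq_mul_iff_exists_mk_eq (B := B) (N := H.normalCore) (g := x * y * x)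
  have h13 := forall₄_congr fun x (hx : x ∈ B) y (hy : y ∈ B) =>
    (exists_mem_eq_mul_iff_of_mk_eq hB.injOn H.normalCore_le (hdotB x hx _ (hdotB y hy x hx))
      (mk_dot_dot hdotB hdotH hx hy)).trans (bol_iff_mem_normalCore hdotB hdotH hB hx hy).symm
  exact ⟨h12, h12.symm.trans h13⟩

/-- Let `G` be a group, `H` a subgroup and `B ⊆ G` a unital
left transversal of `H`, with induced operation `dot` on `B`, and let
`N = core_G(H)` be the normal core of `H` in `G`.  Then the following are
equivalent: (i) `xBx ⊆ BN` for all `x ∈ B`; (ii) in the quotient group `G/N`,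
`(xN)(yN)(xN) ∈ {bN : b ∈ B}` for all `x, y ∈ B`; (iii) `(B, dot)` is a Bol
loop, i.e. `L x ∘ L y ∘ L x = L (x·(y·x))` pointwise on `B`. -/
theorem statement15 {G : Type*} [Group G] (H : Subgroup G) (B : Set G)
    (h1B : (1 : G) ∈ B)
    (htrans : ∀ g : G, ∃! b : G, b ∈ B ∧ b⁻¹ * g ∈ H)
    (dot : G → G → G)
    (hdotB : ∀ x ∈ B, ∀ y ∈ B, dot x y ∈ B)
    (hdotH : ∀ x ∈ B, ∀ y ∈ B, (dot x y)⁻¹ * (x * y) ∈ H) :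
    ((∀ x ∈ B, ∀ y ∈ B, ∃ b ∈ B, ∃ n ∈ H.normalCore, x * y * x = b * n) ↔
      (∀ x ∈ B, ∀ y ∈ B, ∃ b ∈ B,
        (x : G ⧸ H.normalCore) * (y : G ⧸ H.normalCore) * (x : G ⧸ H.normalCore)
          = (b : G ⧸ H.normalCore))) ∧
    ((∀ x ∈ B, ∀ y ∈ B, ∃ b ∈ B,
        (x : G ⧸ H.normalCore) * (y : G ⧸ H.normalCore) * (x : G ⧸ H.normalCore)
          = (b : G ⧸ H.normalCore)) ↔
      (∀ x ∈ B, ∀ y ∈ B, ∀ z ∈ B,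
        dot x (dot y (dot x z)) = dot (dot x (dot y x)) z)) :=
  statement15_general H B htrans dot hdotB hdotH
end

section
/- Let G be a group, H a subgroup of G, and B ⊆ G a unital left transversal of H, with induced operation · on B, and let N = core_G(H) be the normal core of H in G. Then the following are equivalent: (i) xy²x ∈ (x·y)²N for all x,y ∈ B; (ii) in the quotient group G/N, (xN)(yN)²(xN) = ((x·y)N)² for all x,y ∈ B; (iii) (B,·) satisfies the identity L_x ∘ L_y ∘ L_y ∘ L_x = L_{x·y} ∘ L_{x·y} for all x,y ∈ B. -/
/-!
Since `(x·y)H = x(yH)`, the bijection `B ≃ G ⧸ H`, `b ↦ bH`, turns the left translation `L x`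
into the action of `x` on `G ⧸ H`. So (iii) says that `x y² x` and `(x·y)²` act alike on
`G ⧸ H`, and the kernel of this action is the normal core, which is (ii); (i) is (ii) unfolded.
-/

namespace Subgroup

variable {G : Type*} [Group G]

theorem mk_normalCore_eq_mk_iff (H : Subgroup G) {g g' : G} :
    (g : G ⧸ H.normalCore) = g' ↔ ∀ q : G ⧸ H, g • q = g' • q := by
  rw [QuotientGroup.eq, normalCore_eq_ker, MonoidHom.mem_ker, Equiv.Perm.ext_iff]
  simp only [MulAction.toPermHom_apply, MulAction.toPerm_apply, Equiv.Perm.coe_one, id_eq,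
    mul_smul, inv_smul_eq_iff]
  exact forall_congr' fun q => eq_comm

end Subgroup

theorem QuotientGroup.exists_mem_eq_mul_iff {G : Type*} [Group G] {N : Subgroup G} {a b : G} :
    (∃ n ∈ N, a = b * n) ↔ (a : G ⧸ N) = b := by
  rw [eq_comm, QuotientGroup.eq]
  constructor
  · rintro ⟨n, hn, rfl⟩
    simpa using hn
  · exact fun h => ⟨_, h, (mul_inv_cancel_left b a).symm⟩

section Transversal

variable {G : Type*} [Group G] {H : Subgroup G} {B : Set G}

theorem mk_injOn_of_existsUnique (htrans : ∀ g : G, ∃! b : G, b ∈ B ∧ b⁻¹ * g ∈ H) :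
    Set.InjOn (QuotientGroup.mk : G → G ⧸ H) B := by
  intro a ha b hb hab
  obtain ⟨c, -, hc⟩ := htrans a
  rw [hc a ⟨ha, by simp⟩, hc b ⟨hb, QuotientGroup.eq.mp hab.symm⟩]

theorem forall_mem_mk_iff_of_existsUnique (htrans : ∀ g : G, ∃! b : G, b ∈ B ∧ b⁻¹ * g ∈ H)
    {p : G ⧸ H → Prop} : (∀ b ∈ B, p b) ↔ ∀ q, p q := by
  refine ⟨fun h q => ?_, fun h b _ => h b⟩
  induction q using QuotientGroup.induction_on with
  | H g =>
    obtain ⟨b, ⟨hb, hbg⟩, -⟩ := htrans g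
    rw [← QuotientGroup.eq.mpr hbg]
    exact h b hb

theorem mk_dot_eq_smul {dot : G → G → G}
    (hdotH : ∀ x ∈ B, ∀ y ∈ B, (dot x y)⁻¹ * (x * y) ∈ H) {x y : G} (hx : x ∈ B) (hy : y ∈ B) :
    (dot x y : G ⧸ H) = x • (y : G ⧸ H) :=
  QuotientGroup.eq.mpr (hdotH x hx y hy)

theorem forall_dot_eq_iff_mk_normalCore_eq
    (htrans : ∀ g : G, ∃! b : G, b ∈ B ∧ b⁻¹ * g ∈ H) {dot : G → G → G}
    (hdotB : ∀ x ∈ B, ∀ y ∈ B, dot x y ∈ B)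
    (hdotH : ∀ x ∈ B, ∀ y ∈ B, (dot x y)⁻¹ * (x * y) ∈ H) {x y : G} (hx : x ∈ B) (hy : y ∈ B) :
    (∀ z ∈ B, dot x (dot y (dot y (dot x z))) = dot (dot x y) (dot (dot x y) z)) ↔
      ((x * (y * y) * x : G) : G ⧸ H.normalCore) = (dot x y * dot x y : G) := by
  rw [H.mk_normalCore_eq_mk_iff, ← forall_mem_mk_iff_of_existsUnique htrans]
  refine forall₂_congr fun z hz => ?_
  have hxy := hdotB x hx y hy
  have hxz := hdotB x hx z hz
  have hyxz := hdotB y hy _ hxz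
  have hyyxz := hdotB y hy _ hyxz
  rw [← (mk_injOn_of_existsUnique htrans).eq_iff (hdotB x hx _ hyyxz)
    (hdotB _ hxy _ (hdotB _ hxy z hz))]
  simp only [mk_dot_eq_smul hdotH, hx, hy, hz, hxy, hxz, hyxz, hyyxz, hdotB, mul_smul]

end Transversal

theorem statement16_general {G : Type*} [Group G] (H : Subgroup G) (B : Set G)
    (htrans : ∀ g : G, ∃! b : G, b ∈ B ∧ b⁻¹ * g ∈ H)
    (dot : G → G → G)
    (hdotB : ∀ x ∈ B, ∀ y ∈ B, dot x y ∈ B)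
    (hdotH : ∀ x ∈ B, ∀ y ∈ B, (dot x y)⁻¹ * (x * y) ∈ H) :
    ((∀ x ∈ B, ∀ y ∈ B, ∃ n ∈ H.normalCore, x * (y * y) * x = (dot x y * dot x y) * n) ↔
      (∀ x ∈ B, ∀ y ∈ B,
        (x : G ⧸ H.normalCore) * ((y : G ⧸ H.normalCore) * (y : G ⧸ H.normalCore))
            * (x : G ⧸ H.normalCore)
          = (dot x y : G ⧸ H.normalCore) * (dot x y : G ⧸ H.normalCore))) ∧
    ((∀ x ∈ B, ∀ y ∈ B,
        (x : G ⧸ H.normalCore) * ((y : G ⧸ H.normalCore) * (y : G ⧸ H.normalCore))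
            * (x : G ⧸ H.normalCore)
          = (dot x y : G ⧸ H.normalCore) * (dot x y : G ⧸ H.normalCore)) ↔
      (∀ x ∈ B, ∀ y ∈ B, ∀ z ∈ B,
        dot x (dot y (dot y (dot x z))) = dot (dot x y) (dot (dot x y) z))) := by
  simp only [← QuotientGroup.mk_mul]
  refine ⟨forall₂_congr fun x _ => forall₂_congr fun y _ => ?_,
    forall₂_congr fun x hx => forall₂_congr fun y hy => ?_⟩
  · exact QuotientGroup.exists_mem_eq_mul_iff
  · exact (forall_dot_eq_iff_mk_normalCore_eq htrans hdotB hdotH hx hy).symm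

/-- Let `G` be a group, `H` a subgroup and `B ⊆ G` a unital
left transversal of `H`, with induced operation `dot` on `B`, and let
`N = core_G(H)` be the normal core of `H` in `G`.  Then the following are
equivalent: (i) `x y² x ∈ (x·y)² N` for all `x, y ∈ B`; (ii) in the quotient
group `G/N`, `(xN)(yN)²(xN) = ((x·y)N)²` for all `x, y ∈ B`; (iii) `(B, dot)`
satisfies `L x ∘ L y ∘ L y ∘ L x = L (x·y) ∘ L (x·y)` pointwise on `B`. -/
theorem statement16 {G : Type*} [Group G] (H : Subgroup G) (B : Set G)
    (h1B : (1 : G) ∈ B)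
    (htrans : ∀ g : G, ∃! b : G, b ∈ B ∧ b⁻¹ * g ∈ H)
    (dot : G → G → G)
    (hdotB : ∀ x ∈ B, ∀ y ∈ B, dot x y ∈ B)
    (hdotH : ∀ x ∈ B, ∀ y ∈ B, (dot x y)⁻¹ * (x * y) ∈ H) :
    ((∀ x ∈ B, ∀ y ∈ B, ∃ n ∈ H.normalCore, x * (y * y) * x = (dot x y * dot x y) * n) ↔
      (∀ x ∈ B, ∀ y ∈ B,
        (x : G ⧸ H.normalCore) * ((y : G ⧸ H.normalCore) * (y : G ⧸ H.normalCore))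
            * (x : G ⧸ H.normalCore)
          = (dot x y : G ⧸ H.normalCore) * (dot x y : G ⧸ H.normalCore))) ∧
    ((∀ x ∈ B, ∀ y ∈ B,
        (x : G ⧸ H.normalCore) * ((y : G ⧸ H.normalCore) * (y : G ⧸ H.normalCore))
            * (x : G ⧸ H.normalCore)
          = (dot x y : G ⧸ H.normalCore) * (dot x y : G ⧸ H.normalCore)) ↔
      (∀ x ∈ B, ∀ y ∈ B, ∀ z ∈ B,
        dot x (dot y (dot y (dot x z))) = dot (dot x y) (dot (dot x y) z))) :=
  statement16_general H B htrans dot hdotB hdotH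
end

section
/- Let G be a group, H a subgroup of G, and B ⊆ G a unital left transversal of H, with induced operation · on B, action σ and mapping m, and let N = core_G(H) and BN = {bn : b ∈ B, n ∈ N}. For each h ∈ H the following are equivalent: (i) σ_h is an automorphism of (B,·), i.e. σ_h(x·y) = σ_h(x)·σ_h(y) for all x,y ∈ B; (ii) hBh⁻¹ ⊆ BN; (iii) m(x,h) ∈ N for all x ∈ B. -/
/-!
Everything is read off in `G ⧸ H`, on which `B` injects. The identity `σ_h(x·y) = σ_h(x)·σ_h(y)`
compares the cosets `hxyH` and `σ_h(x) h y H`, so it says that `(hy)⁻¹ m(x,h) (hy) ∈ H`; as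
`y` runs over `B`, `hy` runs over the left transversal `hB`, whence (i) ↔ (iii). For (ii), a
factorisation `hxh⁻¹ = bn` with `n ∈ N ≤ H` forces `b` to be the representative `σ_h(x)` of
`hxH = hxh⁻¹H`, and then `n = m(x,h)`.
-/

open QuotientGroup

namespace Subgroup

variable {G : Type*} [Group G] {H : Subgroup G} {B : Set G}

theorem injOn_mk_of_existsUnique (htrans : ∀ g : G, ∃! b : G, b ∈ B ∧ b⁻¹ * g ∈ H) :
    B.InjOn (QuotientGroup.mk : G → G ⧸ H) := fun b₁ hb₁ b₂ hb₂ he =>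
  (htrans b₂).unique ⟨hb₁, QuotientGroup.eq.1 he⟩ ⟨hb₂, by simp⟩

theorem mem_normalCore_iff_forall_conj_mem (hB : ∀ g : G, ∃ b ∈ B, b⁻¹ * g ∈ H) (c a : G) :
    a ∈ H.normalCore ↔ ∀ b ∈ B, (c * b)⁻¹ * a * (c * b) ∈ H := by
  refine ⟨fun ha b _ => by simpa using ha (c * b)⁻¹, fun h g => ?_⟩
  obtain ⟨b, hb, hk⟩ := hB (c⁻¹ * g⁻¹)
  have hconj : g * a * g⁻¹ =
      (b⁻¹ * (c⁻¹ * g⁻¹))⁻¹ * ((c * b)⁻¹ * a * (c * b)) * (b⁻¹ * (c⁻¹ * g⁻¹)) := by group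
  rw [hconj]
  exact H.mul_mem (H.mul_mem (H.inv_mem hk) (h b hb)) hk

theorem exists_mem_mul_mem_iff (hinj : B.InjOn (QuotientGroup.mk : G → G ⧸ H))
    {N : Subgroup G} (hN : N ≤ H) {u b₀ : G} (hb₀ : b₀ ∈ B) (hb₀u : (b₀ : G ⧸ H) = u) :
    (∃ b ∈ B, ∃ n ∈ N, u = b * n) ↔ b₀⁻¹ * u ∈ N := by
  constructor
  · rintro ⟨b, hb, n, hn, rfl⟩
    obtain rfl : b = b₀ := hinj hb hb₀ ((mk_mul_of_mem b (hN hn)).symm.trans hb₀u.symm)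
    simpa using hn
  · exact fun h => ⟨b₀, hb₀, b₀⁻¹ * u, h, (mul_inv_cancel_left b₀ u).symm⟩

theorem map_dot_eq_dot_iff (hinj : B.InjOn (QuotientGroup.mk : G → G ⧸ H))
    {dot : G → G → G} (hdotB : ∀ x ∈ B, ∀ y ∈ B, dot x y ∈ B)
    (hdot : ∀ x ∈ B, ∀ y ∈ B, (dot x y : G ⧸ H) = (x * y : G))
    {g : G} {s : G → G} (hsB : ∀ x ∈ B, s x ∈ B) (hs : ∀ x ∈ B, (s x : G ⧸ H) = (g * x : G))
    {x y : G} (hx : x ∈ B) (hy : y ∈ B) :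
    s (dot x y) = dot (s x) (s y) ↔ (g * y)⁻¹ * ((s x)⁻¹ * g * x * g⁻¹) * (g * y) ∈ H := by
  have hleft : (s (dot x y) : G ⧸ H) = (g * (x * y) : G) := by
    rw [hs _ (hdotB x hx y hy), ← smul_eq_mul g, ← MulAction.Quotient.smul_mk, hdot x hx y hy,
      MulAction.Quotient.smul_mk, smul_eq_mul]
  have hright : (dot (s x) (s y) : G ⧸ H) = (s x * (g * y) : G) := by
    rw [hdot _ (hsB x hx) _ (hsB y hy), ← smul_eq_mul (s x), ← MulAction.Quotient.smul_mk,
      hs y hy, MulAction.Quotient.smul_mk, smul_eq_mul]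
  rw [← hinj.eq_iff (hsB _ (hdotB x hx y hy)) (hdotB _ (hsB x hx) _ (hsB y hy)), hleft, hright,
    QuotientGroup.eq, ← H.inv_mem_iff]
  convert Iff.rfl using 2
  group

end Subgroup

theorem statement17_general {G : Type*} [Group G] (H : Subgroup G) (B : Set G)
    (htrans : ∀ g : G, ∃! b : G, b ∈ B ∧ b⁻¹ * g ∈ H)
    (dot : G → G → G)
    (hdotB : ∀ x ∈ B, ∀ y ∈ B, dot x y ∈ B)
    (hdotH : ∀ x ∈ B, ∀ y ∈ B, (dot x y)⁻¹ * (x * y) ∈ H)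
    (σ : G → G → G)
    (hσB : ∀ g : G, ∀ x ∈ B, σ g x ∈ B)
    (hσH : ∀ g : G, ∀ x ∈ B, (σ g x)⁻¹ * (g * x) ∈ H) :
    ∀ h ∈ H,
      ((∀ x ∈ B, ∀ y ∈ B, σ h (dot x y) = dot (σ h x) (σ h y)) ↔
        (∀ x ∈ B, ∃ b ∈ B, ∃ n ∈ H.normalCore, h * x * h⁻¹ = b * n)) ∧
      ((∀ x ∈ B, ∃ b ∈ B, ∃ n ∈ H.normalCore, h * x * h⁻¹ = b * n) ↔
        (∀ x ∈ B, (σ h x)⁻¹ * h * x * h⁻¹ ∈ H.normalCore)) := by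
  intro h hh
  have hinj := Subgroup.injOn_mk_of_existsUnique htrans
  have hσ : ∀ x ∈ B, (σ h x : G ⧸ H) = (h * x : G) := fun x hx => QuotientGroup.eq.2 (hσH h x hx)
  have hdot : ∀ x ∈ B, ∀ y ∈ B, (dot x y : G ⧸ H) = (x * y : G) :=
    fun x hx y hy => QuotientGroup.eq.2 (hdotH x hx y hy)
  have i_iff_iii : (∀ x ∈ B, ∀ y ∈ B, σ h (dot x y) = dot (σ h x) (σ h y)) ↔
      ∀ x ∈ B, (σ h x)⁻¹ * h * x * h⁻¹ ∈ H.normalCore :=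
    forall₂_congr fun x hx => by
      rw [Subgroup.mem_normalCore_iff_forall_conj_mem (fun g => (htrans g).exists) h]
      exact forall₂_congr fun y hy => Subgroup.map_dot_eq_dot_iff hinj hdotB hdot (hσB h) hσ hx hy
  have ii_iff_iii : (∀ x ∈ B, ∃ b ∈ B, ∃ n ∈ H.normalCore, h * x * h⁻¹ = b * n) ↔
      ∀ x ∈ B, (σ h x)⁻¹ * h * x * h⁻¹ ∈ H.normalCore :=
    forall₂_congr fun x hx => by
      rw [Subgroup.exists_mem_mul_mem_iff hinj H.normalCore_le (hσB h x hx)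
        ((hσ x hx).trans (mk_mul_of_mem _ (H.inv_mem hh)).symm)]
      simp only [mul_assoc]
  exact ⟨i_iff_iii.trans ii_iff_iii.symm, ii_iff_iii⟩

/-- Let `G` be a group, `H` a subgroup and `B ⊆ G` a unital
left transversal of `H`, with induced operation `dot`, action `σ`, and mapping
`m(x,h) = (σ h x)⁻¹ h x h⁻¹`, and let `N = core_G(H)` be the normal core of `H`
in `G` and `BN = {bn : b ∈ B, n ∈ N}`.  For each `h ∈ H` the following are
equivalent: (i) `σ h` is an automorphism of `(B, dot)`; (ii) `hBh⁻¹ ⊆ BN`;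
(iii) `m(x,h) ∈ N` for all `x ∈ B`. -/
theorem statement17 {G : Type*} [Group G] (H : Subgroup G) (B : Set G)
    (h1B : (1 : G) ∈ B)
    (htrans : ∀ g : G, ∃! b : G, b ∈ B ∧ b⁻¹ * g ∈ H)
    (dot : G → G → G)
    (hdotB : ∀ x ∈ B, ∀ y ∈ B, dot x y ∈ B)
    (hdotH : ∀ x ∈ B, ∀ y ∈ B, (dot x y)⁻¹ * (x * y) ∈ H)
    (σ : G → G → G)
    (hσB : ∀ g : G, ∀ x ∈ B, σ g x ∈ B)
    (hσH : ∀ g : G, ∀ x ∈ B, (σ g x)⁻¹ * (g * x) ∈ H) :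
    ∀ h ∈ H,
      ((∀ x ∈ B, ∀ y ∈ B, σ h (dot x y) = dot (σ h x) (σ h y)) ↔
        (∀ x ∈ B, ∃ b ∈ B, ∃ n ∈ H.normalCore, h * x * h⁻¹ = b * n)) ∧
      ((∀ x ∈ B, ∃ b ∈ B, ∃ n ∈ H.normalCore, h * x * h⁻¹ = b * n) ↔
        (∀ x ∈ B, (σ h x)⁻¹ * h * x * h⁻¹ ∈ H.normalCore)) :=
  statement17_general H B htrans dot hdotB hdotH σ hσB hσH
end

section
/- Let G be a group, H a subgroup of G, and B ⊆ G a unital left transversal of H, with induced operation · on B, and let τ : G → G be defined by τ(ah) = a⁻¹h for a ∈ B, h ∈ H. Then: (1) τ is injective if and only if the right inversion map ρ : B → B, ρ(x) = x^ρ, is injective; (2) τ is surjective if and only if ρ is surjective, i.e. if and only if every element of (B,·) has a left inverse. -/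
/-!
Through the factorization `G = B H`, the map `τ` becomes `(a, h) ↦ (a^ρ, (a a^ρ)⁻¹ h)`, since
`a⁻¹ h = a^ρ (a a^ρ)⁻¹ h` and `a a^ρ ∈ H`. On each fibre `{a} × H` the second component is a
left translation of `H`, so `τ` is injective or surjective exactly when `ρ` is.
-/

open Function

section Shear

variable {α β γ : Type*} [Nonempty β]

theorem injective_prodShear_iff (f : α → γ) (σ : α → Equiv.Perm β) :
    Injective (fun p : α × β => (f p.1, σ p.1 p.2)) ↔ Injective f := by
  refine ⟨fun hF a a' hfa => ?_, fun hf => ?_⟩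
  · inhabit β
    exact congrArg Prod.fst
      (hF (a₁ := (a, (σ a).symm default)) (a₂ := (a', (σ a').symm default)) (by simp [hfa]))
  · rintro ⟨a, b⟩ ⟨a', b'⟩ hpq
    obtain ⟨hfa, hσ⟩ : f a = f a' ∧ σ a b = σ a' b' := Prod.mk.inj hpq
    obtain rfl := hf hfa
    rw [(σ a).injective hσ]

theorem surjective_prodShear_iff (f : α → γ) (σ : α → Equiv.Perm β) :
    Surjective (fun p : α × β => (f p.1, σ p.1 p.2)) ↔ Surjective f := by
  refine ⟨fun hF c => ?_, fun hf c => ?_⟩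
  · inhabit β
    obtain ⟨p, hp⟩ := hF (c, default)
    exact ⟨p.1, congrArg Prod.fst hp⟩
  · obtain ⟨a, ha⟩ := hf c.1
    exact ⟨(a, (σ a).symm c.2), Prod.ext ha (by simp)⟩

end Shear

namespace Subgroup

variable {G : Type*} [Group G] {B : Set G} {H : Subgroup G}

theorem isComplement_of_existsUnique_inv_mul_mem
    (htrans : ∀ g : G, ∃! b : G, b ∈ B ∧ b⁻¹ * g ∈ H) : IsComplement B H := by
  refine isComplement_iff_existsUnique_inv_mul_mem.mpr fun g => ?_
  obtain ⟨b, ⟨hbB, hbH⟩, hb⟩ := htrans g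
  exact ⟨⟨b, hbB⟩, hbH, fun b' hb' => Subtype.ext (hb b' ⟨b'.2, hb'⟩)⟩

theorem IsComplement.injective_iff_and_surjective_iff_of_map_mul (hc : IsComplement B H)
    {τ : G → G} (ρ : B → B) (κ : B → H) (hτ : ∀ (a : B) (h : H), τ (a * h) = ρ a * (κ a * h)) :
    (Injective τ ↔ Injective ρ) ∧ (Surjective τ ↔ Surjective ρ) := by
  let m : B × H ≃ G := Equiv.ofBijective _ hc
  have hτm : τ ∘ m = m ∘ fun p => (ρ p.1, Equiv.mulLeft (κ p.1) p.2) :=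
    funext fun p => hτ p.1 p.2
  constructor
  · rw [← m.injective_comp, hτm, m.comp_injective]
    exact injective_prodShear_iff ρ fun a => Equiv.mulLeft (κ a)
  · rw [← m.surjective_comp, hτm, m.comp_surjective]
    exact surjective_prodShear_iff ρ fun a => Equiv.mulLeft (κ a)

end Subgroup

theorem statement18_general {G : Type*} [Group G] (H : Subgroup G) (B : Set G)
    (htrans : ∀ g : G, ∃! b : G, b ∈ B ∧ b⁻¹ * g ∈ H)
    (dot : G → G → G)
    (hdotH : ∀ x ∈ B, ∀ y ∈ B, (dot x y)⁻¹ * (x * y) ∈ H)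
    (τ : G → G)
    (hτ : ∀ a ∈ B, ∀ h ∈ H, τ (a * h) = a⁻¹ * h)
    (rho : G → G)
    (hrhoB : ∀ x ∈ B, rho x ∈ B)
    (hrho : ∀ x ∈ B, dot x (rho x) = 1) :
    (Function.Injective τ ↔ Set.InjOn rho B) ∧
    (Function.Surjective τ ↔ Set.SurjOn rho B B) := by
  have hmaps : Set.MapsTo rho B B := hrhoB
  have hmul_rho : ∀ x ∈ B, x * rho x ∈ H := fun x hx => by
    simpa [hrho x hx] using hdotH x hx (rho x) (hrhoB x hx)
  let κ : B → H := fun a => ⟨(a * rho a)⁻¹, H.inv_mem (hmul_rho a a.2)⟩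
  have hτ' : ∀ (a : B) (h : H), τ (a * h) = rho a * ((κ a : G) * h) := fun a h => by
    rw [hτ a a.2 h h.2]
    show _ = rho a * ((a * rho a)⁻¹ * h)
    group
  rw [← hmaps.restrict_inj, ← hmaps.restrict_surjective_iff]
  have hc := Subgroup.isComplement_of_existsUnique_inv_mul_mem htrans
  exact hc.injective_iff_and_surjective_iff_of_map_mul _ κ hτ'

/-- Let `G` be a group, `H` a subgroup and `B ⊆ G` a unital
left transversal of `H`, with induced operation `dot` on `B`.  Let
`τ : G → G` be defined on the unique factorization by `τ (a*h) = a⁻¹*h`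
(`a ∈ B`, `h ∈ H`), and let `rho : B → B` be right inversion, `rho x = x^ρ`,
the unique element of `B` with `dot x (rho x) = 1`.  Then:
(1) `τ` is injective iff `rho` is injective on `B`;
(2) `τ` is surjective iff `rho` maps `B` onto `B`, i.e. iff every element of
`(B, dot)` has a left inverse. -/
theorem statement18 {G : Type*} [Group G] (H : Subgroup G) (B : Set G)
    (h1B : (1 : G) ∈ B)
    (htrans : ∀ g : G, ∃! b : G, b ∈ B ∧ b⁻¹ * g ∈ H)
    (dot : G → G → G)
    (hdotB : ∀ x ∈ B, ∀ y ∈ B, dot x y ∈ B)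
    (hdotH : ∀ x ∈ B, ∀ y ∈ B, (dot x y)⁻¹ * (x * y) ∈ H)
    (τ : G → G)
    (hτ : ∀ a ∈ B, ∀ h ∈ H, τ (a * h) = a⁻¹ * h)
    (rho : G → G)
    (hrhoB : ∀ x ∈ B, rho x ∈ B)
    (hrho : ∀ x ∈ B, dot x (rho x) = 1) :
    (Function.Injective τ ↔ Set.InjOn rho B) ∧
    (Function.Surjective τ ↔ Set.SurjOn rho B B) :=
  statement18_general H B htrans dot hdotH τ hτ rho hrhoB hrho
end

section
/- Let G be a group, H a subgroup of G, and B ⊆ G a unital left transversal of H, with induced operation · on B, and suppose G is generated by B. Let τ : G → G be defined by τ(ah) = a⁻¹h for a ∈ B, h ∈ H. Then τ is an automorphism of the group G if and only if xy²x = (x·y)² for all x,y ∈ B. -/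
/-!
If `τ` is multiplicative then `τ (x*y) = x⁻¹ y⁻¹`, while the factorization `x*y = (x·y) h`
gives `τ (x*y) = (x·y)⁻² x y`; comparing the two is exactly `x y² x = (x·y)²`.
Conversely, that identity yields `τ (x*g) = x⁻¹ τ g` for every `x ∈ B`, so the elements `g`
with `τ (g*k) = τ g * τ k` for all `k` form a subgroup containing `B`, hence all of `G`.
Then `τ ∘ τ` is an endomorphism fixing the generators `B`, so `τ` is an involution.
-/

section LeftMultiplicative

variable {G : Type*} [Group G]

def leftMulSubgroup (τ : G → G) (h1 : τ 1 = 1) : Subgroup G where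
  carrier := {g | ∀ k, τ (g * k) = τ g * τ k}
  one_mem' k := by simp [h1]
  mul_mem' {a b} ha hb k := by rw [mul_assoc, ha, hb, ha, mul_assoc]
  inv_mem' {a} ha k := by
    have hinv : ∀ k, τ (a⁻¹ * k) = (τ a)⁻¹ * τ k := fun k => by
      rw [eq_inv_mul_iff_mul_eq, ← ha, mul_inv_cancel_left]
    have hτinv : τ a⁻¹ = (τ a)⁻¹ := by simpa [h1] using hinv 1
    rw [hinv, hτinv]

theorem map_mul_of_closure_eq_top {τ : G → G} {B : Set G} (hgen : Subgroup.closure B = ⊤)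
    (h1 : τ 1 = 1) (hB : ∀ x ∈ B, ∀ k, τ (x * k) = τ x * τ k) (a b : G) :
    τ (a * b) = τ a * τ b := by
  have hle : Subgroup.closure B ≤ leftMulSubgroup τ h1 := (Subgroup.closure_le _).2 hB
  exact hle (hgen ▸ Subgroup.mem_top a) b

theorem involutive_of_map_mul_of_closure_eq_top {τ : G → G} {B : Set G}
    (hgen : Subgroup.closure B = ⊤) (hmul : ∀ a b, τ (a * b) = τ a * τ b)
    (hB : ∀ x ∈ B, τ x = x⁻¹) : Function.Involutive τ := by
  let f : G →* G := MonoidHom.mk' τ hmul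
  have hff : f.comp f = MonoidHom.id G :=
    MonoidHom.eq_of_eqOn_dense hgen fun x hx => by
      have hfx : f x = x⁻¹ := hB x hx
      simp [hfx]
  exact fun g => DFunLike.congr_fun hff g

end LeftMultiplicative

section Transversal

variable {G : Type*} [Group G] {H : Subgroup G} {B : Set G} {τ : G → G}

theorem tau_eq_of_mem_transversal (hτ : ∀ a ∈ B, ∀ h ∈ H, τ (a * h) = a⁻¹ * h)
    {b g : G} (hb : b ∈ B) (hbg : b⁻¹ * g ∈ H) : τ g = b⁻¹ * (b⁻¹ * g) := by
  simpa using hτ b hb _ hbg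

theorem tau_of_mem (hτ : ∀ a ∈ B, ∀ h ∈ H, τ (a * h) = a⁻¹ * h) {x : G} (hx : x ∈ B) :
    τ x = x⁻¹ := by
  simpa using tau_eq_of_mem_transversal hτ hx (g := x) (by simp [H.one_mem])

theorem mul_sq_mul_eq_sq_of_tau_mul (hτ : ∀ a ∈ B, ∀ h ∈ H, τ (a * h) = a⁻¹ * h)
    {x y d : G} (hx : x ∈ B) (hy : y ∈ B) (hd : d ∈ B) (hdxy : d⁻¹ * (x * y) ∈ H)
    (hmul : τ (x * y) = τ x * τ y) : x * (y * y) * x = d * d := by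
  rw [tau_eq_of_mem_transversal hτ hd hdxy, tau_of_mem hτ hx, tau_of_mem hτ hy] at hmul
  have hxy : x * y = d * (d * (x⁻¹ * y⁻¹)) := by rw [← hmul]; group
  calc x * (y * y) * x = (x * y) * (y * x) := by group
    _ = d * (d * (x⁻¹ * y⁻¹)) * (y * x) := by rw [hxy]
    _ = d * d := by group

theorem tau_mul_left_of_mul_sq_mul_eq_sq (hτ : ∀ a ∈ B, ∀ h ∈ H, τ (a * h) = a⁻¹ * h)
    {x b d g : G} (hb : b ∈ B) (hbg : b⁻¹ * g ∈ H) (hd : d ∈ B) (hdxb : d⁻¹ * (x * b) ∈ H)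
    (hsq : x * (b * b) * x = d * d) : τ (x * g) = x⁻¹ * τ g := by
  have hfac : x * g = d * (d⁻¹ * (x * b) * (b⁻¹ * g)) := by group
  have hdd : d⁻¹ * d⁻¹ = x⁻¹ * b⁻¹ * b⁻¹ * x⁻¹ := by
    rw [← mul_inv_rev, ← hsq]; group
  rw [hfac, hτ d hd _ (H.mul_mem hdxb hbg), tau_eq_of_mem_transversal hτ hb hbg]
  calc d⁻¹ * (d⁻¹ * (x * b) * (b⁻¹ * g))
      = (d⁻¹ * d⁻¹) * (x * b) * (b⁻¹ * g) := by group
    _ = (x⁻¹ * b⁻¹ * b⁻¹ * x⁻¹) * (x * b) * (b⁻¹ * g) := by rw [hdd]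
    _ = x⁻¹ * (b⁻¹ * (b⁻¹ * g)) := by group

end Transversal

theorem statement19_general {G : Type*} [Group G] (H : Subgroup G) (B : Set G)
    (htrans : ∀ g : G, ∃! b : G, b ∈ B ∧ b⁻¹ * g ∈ H)
    (dot : G → G → G)
    (hdotB : ∀ x ∈ B, ∀ y ∈ B, dot x y ∈ B)
    (hdotH : ∀ x ∈ B, ∀ y ∈ B, (dot x y)⁻¹ * (x * y) ∈ H)
    (hgen : Subgroup.closure B = ⊤)
    (τ : G → G)
    (hτ : ∀ a ∈ B, ∀ h ∈ H, τ (a * h) = a⁻¹ * h) :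
    (Function.Bijective τ ∧ ∀ g₁ g₂ : G, τ (g₁ * g₂) = τ g₁ * τ g₂) ↔
      (∀ x ∈ B, ∀ y ∈ B, x * (y * y) * x = dot x y * dot x y) := by
  constructor
  · rintro ⟨-, hmul⟩ x hx y hy
    exact mul_sq_mul_eq_sq_of_tau_mul hτ hx hy (hdotB x hx y hy) (hdotH x hx y hy) (hmul x y)
  · intro hsq
    have hleft : ∀ x ∈ B, ∀ g, τ (x * g) = x⁻¹ * τ g := fun x hx g => by
      obtain ⟨b, ⟨hb, hbg⟩, -⟩ := htrans g
      exact tau_mul_left_of_mul_sq_mul_eq_sq hτ hb hbg (hdotB x hx b hb) (hdotH x hx b hb)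
        (hsq x hx b hb)
    obtain ⟨b, ⟨hb, -⟩, -⟩ := htrans 1
    have h1 : τ 1 = 1 := by
      simpa [tau_of_mem hτ hb] using hleft b hb 1
    have hmul := map_mul_of_closure_eq_top hgen h1 fun x hx k => by
      rw [hleft x hx, tau_of_mem hτ hx]
    have hinvol := involutive_of_map_mul_of_closure_eq_top hgen hmul fun x hx => tau_of_mem hτ hx
    exact ⟨hinvol.bijective, hmul⟩

/-- Let `G` be a group, `H` a subgroup and `B ⊆ G` a unital
left transversal of `H`, with induced operation `dot` on `B`, and suppose `G`
is generated by `B`.  Let `τ : G → G` be defined on the unique factorization by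
`τ (a*h) = a⁻¹*h` (`a ∈ B`, `h ∈ H`).  Then `τ` is an automorphism of the group
`G` (a multiplicative bijection) if and only if `x y² x = (x·y)²` for all
`x, y ∈ B`. -/
theorem statement19 {G : Type*} [Group G] (H : Subgroup G) (B : Set G)
    (h1B : (1 : G) ∈ B)
    (htrans : ∀ g : G, ∃! b : G, b ∈ B ∧ b⁻¹ * g ∈ H)
    (dot : G → G → G)
    (hdotB : ∀ x ∈ B, ∀ y ∈ B, dot x y ∈ B)
    (hdotH : ∀ x ∈ B, ∀ y ∈ B, (dot x y)⁻¹ * (x * y) ∈ H)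
    (hgen : Subgroup.closure B = ⊤)
    (τ : G → G)
    (hτ : ∀ a ∈ B, ∀ h ∈ H, τ (a * h) = a⁻¹ * h) :
    (Function.Bijective τ ∧ ∀ g₁ g₂ : G, τ (g₁ * g₂) = τ g₁ * τ g₂) ↔
      (∀ x ∈ B, ∀ y ∈ B, x * (y * y) * x = dot x y * dot x y) :=
  statement19_general H B htrans dot hdotB hdotH hgen τ hτ
end
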